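/- Let n ≥ 2 and 1 ≤ k ≤ n. If κ = (κ_1, …, κ_n) ∈ Γ_k, then σ_{k−1}(κ|i) > 0 for every index i (i.e., all the partial derivatives σ_k^{ii} = ∂σ_k/∂κ_i are positive on Γ_k). -/

import Mathlib

/-!
Induction on `k`. Since `σ_k(κ) = σ_k(κ|i) + κ_i σ_{k-1}(κ|i)`, a point `κ ∈ Γ_k` with
`σ_{k-1}(κ|i) = 0` has `σ_k(κ|i) > 0`, and `σ_{k-2}(κ|i) > 0` by induction. Differentiating
`∏_{l ≠ i} (X - κ_l)` down to degree `k` keeps all roots real (Rolle) and rescales `σ_{k-2}`,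
`σ_{k-1}`, `σ_k` by positive factors, so we get `k` reals with `σ_{k-1} = 0 < σ_{k-2}, σ_k`,
contradicting `σ_{k-1}² ≥ 2 σ_k σ_{k-2}`. Hence `σ_{k-1}(·|i)` has no zero on `Γ_k`; as `Γ_k` is
stable under `κ ↦ κ + t𝟙` (`t ≥ 0`) and `σ_{k-1}(κ + t𝟙|i) > 0` for large `t`, the intermediate
value theorem gives `σ_{k-1}(κ|i) > 0`.
-/

open Finset

/-- The `k`-th elementary symmetric polynomial of `κ : Fin n → ℝ`. -/
noncomputable def esymm {n : ℕ} (k : ℕ) (κ : Fin n → ℝ) : ℝ :=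
  ∑ s ∈ Finset.univ.powersetCard k, ∏ i ∈ s, κ i

/-- `σ_k(κ|i)`: the `k`-th elementary symmetric polynomial of the tuple obtained
from `κ` by deleting the entry `κ i`. -/
noncomputable def esymmDel {n : ℕ} (k : ℕ) (κ : Fin n → ℝ) (i : Fin n) : ℝ :=
  ∑ s ∈ ({i}ᶜ : Finset (Fin n)).powersetCard k, ∏ j ∈ s, κ j

/-- `σ_k(κ|i,j)`: the `k`-th elementary symmetric polynomial of the tuple obtained
from `κ` by deleting the entries `κ i` and `κ j`. -/
noncomputable def esymmDel2 {n : ℕ} (k : ℕ) (κ : Fin n → ℝ) (i j : Fin n) : ℝ :=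
  ∑ s ∈ ({i, j}ᶜ : Finset (Fin n)).powersetCard k, ∏ l ∈ s, κ l

/-- The Garding cone `Γ_k = {κ : σ_j(κ) > 0 for all 1 ≤ j ≤ k}`. -/
def GardingCone {n : ℕ} (k : ℕ) : Set (Fin n → ℝ) :=
  {κ | ∀ j : ℕ, 1 ≤ j → j ≤ k → 0 < esymm j κ}

open Polynomial

theorem Polynomial.card_roots_le_iterate_derivative (p : ℝ[X]) (d : ℕ) :
    Multiset.card p.roots ≤ Multiset.card (derivative^[d] p).roots + d := by
  induction d with
  | zero => simp
  | succ d ih =>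
    rw [Function.iterate_succ_apply']
    have := card_roots_le_derivative (derivative^[d] p)
    omega

namespace Multiset

section CommRing

variable {R : Type*} [CommRing R]

@[simp]
theorem esymm_zero (s : Multiset R) : s.esymm 0 = 1 := by
  simp [esymm]

theorem esymm_eq_zero_of_card_lt {s : Multiset R} {j : ℕ} (h : card s < j) : s.esymm j = 0 := by
  simp [esymm, powersetCard_eq_empty _ h]

theorem esymm_cons_succ (a : R) (s : Multiset R) (j : ℕ) :
    (a ::ₘ s).esymm (j + 1) = s.esymm (j + 1) + a * s.esymm j := by
  simp [esymm, powersetCard_cons, map_map, sum_map_mul_left]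

/-- Shifting every entry by `t` is the Taylor shift `p ↦ p(X + t)` of `∏ (X + a)`. -/
theorem esymm_map_add_const (s : Multiset R) (t : R) {j : ℕ} (hj : j ≤ card s) :
    (s.map (· + t)).esymm j = ∑ l ∈ Finset.range (j + 1),
      ((l + (card s - j)).choose (card s - j) : R) * s.esymm (j - l) * t ^ l := by
  nontriviality R
  set p := (s.map (X + C ·)).prod
  have hp : p.natDegree = card s := by
    rw [natDegree_multiset_prod_of_monic _ (by simp [monic_X_add_C])]
    simp [map_map]
  have hshift : ((s.map (· + t)).map (X + C ·)).prod = taylor t p := by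
    change _ = taylorAlgHom t p
    rw [map_multiset_prod, map_map, map_map]
    congr 1
    refine map_congr rfl fun a _ => ?_
    simp [taylor_X, taylor_C, add_assoc, add_comm (C t)]
  have hdeg : (hasseDeriv (card s - j) p).natDegree < j + 1 := by
    have := natDegree_hasseDeriv_le p (card s - j)
    omega
  have hcoeff := prod_X_add_C_coeff (s.map (· + t)) (k := card s - j) (by simp)
  rw [card_map, Nat.sub_sub_self hj, hshift, taylor_coeff, eval_eq_sum_range' hdeg] at hcoeff
  rw [← hcoeff]
  refine Finset.sum_congr rfl fun l hl => ?_
  rw [hasseDeriv_coeff, prod_X_add_C_coeff s (by grind)]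
  congr 3
  grind

end CommRing

/-- For `m + 2` reals this is `σ_{m+1}² - 2 σ_{m+2} σ_m = ∑ᵢ (∏_{l ≠ i} λ_l)²`. -/
theorem two_mul_esymm_mul_esymm_le_sq {m : ℕ} {s : Multiset ℝ} (hs : card s = m + 2) :
    2 * s.esymm (m + 2) * s.esymm m ≤ s.esymm (m + 1) ^ 2 := by
  obtain ⟨a, t, rfl, ht⟩ := card_eq_succ_iff.mp hs
  rw [esymm_cons_succ, esymm_cons_succ, esymm_eq_zero_of_card_lt (by omega), zero_add]
  cases m with
  | zero => simp only [esymm_zero]; nlinarith [sq_nonneg (t.esymm 1), sq_nonneg a]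
  | succ m =>
    have ih := two_mul_esymm_mul_esymm_le_sq ht
    rw [esymm_cons_succ]
    nlinarith [sq_nonneg (t.esymm (m + 2)), mul_nonneg (sq_nonneg a) (sub_nonneg.mpr ih)]

/-- The roots of the `d`-th derivative of `∏ (X - a)`, `a ∈ s`, are real by Rolle's theorem, and
their elementary symmetric functions are those of `s` rescaled by ratios of descending factorials. -/
theorem exists_card_eq_esymm_eq_pos_mul {s : Multiset ℝ} {k : ℕ} (hk : k ≤ card s) :
    ∃ u : Multiset ℝ, card u = k ∧ ∀ j ≤ k, ∃ c > 0, u.esymm j = c * s.esymm j := by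
  obtain ⟨d, hd⟩ := Nat.exists_eq_add_of_le hk
  set q := (s.map (X - C ·)).prod
  have hq_coeff {j : ℕ} (hj : j ≤ k) : q.coeff (k - j + d) = (-1) ^ j * s.esymm j := by
    rw [prod_X_sub_C_coeff s (by omega), show card s - (k - j + d) = j by omega]
  set D := derivative^[d] q
  have hD_coeff (l : ℕ) : D.coeff l = (l + d).descFactorial d * q.coeff (l + d) := by
    simp [D, coeff_iterate_derivative]
  have hfac_pos (l : ℕ) : (0 : ℝ) < (l + d).descFactorial d := by
    exact_mod_cast Nat.descFactorial_pos.mpr (by omega)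
  have hD_lead : D.coeff k = (k + d).descFactorial d := by
    have hq_lead := hq_coeff (Nat.zero_le k)
    rw [Nat.sub_zero, pow_zero, one_mul, esymm_zero] at hq_lead
    rw [hD_coeff, hq_lead, mul_one]
  have hD_deg : D.natDegree = k := by
    refine le_antisymm ?_ (le_natDegree_of_ne_zero (hD_lead ▸ (hfac_pos k).ne'))
    have : D.natDegree ≤ q.natDegree - d := natDegree_iterate_derivative q d
    rw [natDegree_multiset_prod_X_sub_C_eq_card] at this
    omega
  have hD_roots : card D.roots = D.natDegree := by
    have : card q.roots ≤ card D.roots + d := card_roots_le_iterate_derivative q d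
    rw [roots_multiset_prod_X_sub_C] at this
    have := card_roots' D
    omega
  refine ⟨D.roots, hD_roots.trans hD_deg, fun j hj => ?_⟩
  have hVieta := coeff_eq_esymm_roots_of_card hD_roots (k := k - j) (by omega)
  rw [hD_coeff, hq_coeff hj, leadingCoeff, hD_deg, hD_lead, show k - (k - j) = j by omega]
    at hVieta
  refine ⟨((k - j + d).descFactorial d : ℝ) / (k + d).descFactorial d,
    div_pos (hfac_pos _) (hfac_pos k), ?_⟩
  rw [div_mul_eq_mul_div, eq_div_iff (hfac_pos k).ne']
  refine mul_left_cancel₀ (pow_ne_zero j (neg_ne_zero.mpr one_ne_zero)) ?_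
  linear_combination -hVieta

theorem esymm_succ_ne_zero {s : Multiset ℝ} {m : ℕ} (h₀ : 0 < s.esymm m)
    (h₂ : 0 < s.esymm (m + 2)) : s.esymm (m + 1) ≠ 0 := by
  intro h₁
  have hcard : m + 2 ≤ card s := not_lt.mp fun h => h₂.ne' (esymm_eq_zero_of_card_lt h)
  obtain ⟨u, hu, hscale⟩ := exists_card_eq_esymm_eq_pos_mul hcard
  obtain ⟨c₀, hc₀, hu₀⟩ := hscale m (by omega)
  obtain ⟨c₁, -, hu₁⟩ := hscale (m + 1) (by omega)
  obtain ⟨c₂, hc₂, hu₂⟩ := hscale (m + 2) le_rfl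
  have := two_mul_esymm_mul_esymm_le_sq hu
  rw [hu₀, hu₁, hu₂, h₁] at this
  nlinarith [mul_pos (mul_pos hc₂ h₂) (mul_pos hc₀ h₀)]

end Multiset

section GardingCone

variable {n : ℕ}

theorem esymm_eq_multiset_esymm (k : ℕ) (κ : Fin n → ℝ) :
    esymm k κ = (univ.val.map κ).esymm k :=
  (esymm_map_val κ univ k).symm

theorem esymmDel_eq_multiset_esymm (k : ℕ) (κ : Fin n → ℝ) (i : Fin n) :
    esymmDel k κ i = (({i}ᶜ : Finset (Fin n)).val.map κ).esymm k :=
  (esymm_map_val κ _ k).symm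

@[simp]
theorem esymmDel_zero (κ : Fin n → ℝ) (i : Fin n) : esymmDel 0 κ i = 1 := by
  simp [esymmDel_eq_multiset_esymm]

theorem le_of_esymm_ne_zero {j : ℕ} {κ : Fin n → ℝ} (h : esymm j κ ≠ 0) : j ≤ n := by
  contrapose! h
  rw [esymm_eq_multiset_esymm]
  exact Multiset.esymm_eq_zero_of_card_lt (by simpa using h)

theorem esymm_succ_eq_esymmDel_add (j : ℕ) (κ : Fin n → ℝ) (i : Fin n) :
    esymm (j + 1) κ = esymmDel (j + 1) κ i + κ i * esymmDel j κ i := by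
  rw [esymm_eq_multiset_esymm, esymmDel_eq_multiset_esymm, esymmDel_eq_multiset_esymm,
    ← insert_compl_self i, insert_val_of_notMem (notMem_compl.mpr (mem_singleton_self i)),
    Multiset.map_cons, Multiset.esymm_cons_succ]

theorem esymmDel_pos_of_forall_pos {j : ℕ} {κ : Fin n → ℝ} (hκ : ∀ l, 0 < κ l) (hj : j < n)
    (i : Fin n) : 0 < esymmDel j κ i :=
  sum_pos (fun s _ => prod_pos fun l _ => hκ l)
    (powersetCard_nonempty.mpr (by simp [card_compl]; omega))

theorem gardingCone_anti {j k : ℕ} (h : j ≤ k) :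
    (GardingCone k : Set (Fin n → ℝ)) ⊆ GardingCone j :=
  fun _ hκ l hl₁ hlj => hκ l hl₁ (hlj.trans h)

theorem esymm_nonneg_of_mem_gardingCone {j k : ℕ} {κ : Fin n → ℝ} (hκ : κ ∈ GardingCone k)
    (hj : j ≤ k) : 0 ≤ esymm j κ := by
  obtain _ | j := j
  · simp [esymm_eq_multiset_esymm]
  · exact (hκ _ j.succ_pos hj).le

theorem add_const_mem_gardingCone {k : ℕ} {κ : Fin n → ℝ} (hκ : κ ∈ GardingCone k) {t : ℝ}
    (ht : 0 ≤ t) : (fun l => κ l + t) ∈ GardingCone k := by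
  intro j hj₁ hjk
  have hjn : j ≤ n := le_of_esymm_ne_zero (hκ j hj₁ hjk).ne'
  rw [esymm_eq_multiset_esymm]
  change 0 < (univ.val.map ((· + t) ∘ κ)).esymm j
  rw [← Multiset.map_map, Multiset.esymm_map_add_const _ _ (by simpa using hjn), sum_range_succ']
  simp_rw [← esymm_eq_multiset_esymm]
  refine add_pos_of_nonneg_of_pos (sum_nonneg fun l hl => ?_) (by simpa using hκ j hj₁ hjk)
  have := esymm_nonneg_of_mem_gardingCone hκ (j := j - (l + 1)) (by omega)
  positivity

theorem esymmDel_ne_zero_of_mem_gardingCone {m : ℕ} {κ : Fin n → ℝ}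
    (hκ : κ ∈ GardingCone (m + 2)) {i : Fin n} (h : 0 < esymmDel m κ i) :
    esymmDel (m + 1) κ i ≠ 0 := by
  intro h₁
  have hsplit := esymm_succ_eq_esymmDel_add (m + 1) κ i
  rw [h₁, mul_zero, add_zero] at hsplit
  rw [esymmDel_eq_multiset_esymm] at h h₁ hsplit
  exact Multiset.esymm_succ_ne_zero h (hsplit ▸ hκ (m + 2) (by omega) le_rfl) h₁

theorem esymmDel_pos_of_mem_gardingCone (m : ℕ) {κ : Fin n → ℝ}
    (hκ : κ ∈ GardingCone (m + 1)) (i : Fin n) : 0 < esymmDel m κ i := by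
  induction m generalizing κ with
  | zero => simp
  | succ m ih =>
    set g : ℝ → ℝ := fun t => esymmDel (m + 1) (fun l => κ l + t) i
    have hg_cont : Continuous g := by
      simp only [g, esymmDel]
      fun_prop
    have hg_ne {t : ℝ} (ht : 0 ≤ t) : g t ≠ 0 := by
      have hκt := add_const_mem_gardingCone hκ ht
      exact esymmDel_ne_zero_of_mem_gardingCone hκt (ih (gardingCone_anti (by omega) hκt))
    obtain ⟨T, hT₀, hT⟩ : ∃ T ≥ (0 : ℝ), ∀ l, 0 < κ l + T :=
      ⟨∑ l, |κ l| + 1, by positivity, fun l => by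
        linarith [single_le_sum (fun l _ => abs_nonneg (κ l)) (mem_univ l), neg_abs_le (κ l)]⟩
    have hgT : 0 < g T :=
      esymmDel_pos_of_forall_pos hT (le_of_esymm_ne_zero (hκ (m + 2) (by omega) le_rfl).ne') i
    have hg₀ : 0 < g 0 := by
      by_contra hg₀
      obtain ⟨t, ht, hgt⟩ :=
        intermediate_value_Icc hT₀ hg_cont.continuousOn ⟨not_lt.mp hg₀, hgT.le⟩
      exact hg_ne ht.1 hgt
    simpa [g] using hg₀

end GardingCone

theorem stmt_5_general (n k : ℕ)
    (κ : Fin n → ℝ) (hκ : κ ∈ GardingCone k) (i : Fin n) :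
    0 < esymmDel (k - 1) κ i := by
  obtain _ | m := k
  · simp
  · exact esymmDel_pos_of_mem_gardingCone m hκ i

/-- If `κ ∈ Γ_k`, then `σ_{k-1}(κ|i) > 0` for every index `i`. -/
theorem stmt_5 (n k : ℕ) (hn : 2 ≤ n) (hk1 : 1 ≤ k) (hk2 : k ≤ n)
    (κ : Fin n → ℝ) (hκ : κ ∈ GardingCone k) (i : Fin n) :
    0 < esymmDel (k - 1) κ i :=
  stmt_5_general n k κ hκ i
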